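/- Let p ∈ (1,∞) and δ ≥ 0. There exist constants c, C > 0 depending only on p such that for all 3×3 real matrices P, Q one has c·|F(P) − F(Q)|² ≤ (S(P) − S(Q))·(P − Q) ≤ C·|F(P) − F(Q)|², and moreover c·φ(|Q^sym|) ≤ S(Q)·Q ≤ C·φ(|Q^sym|) and c·φ(|Q^sym|) ≤ |F(Q)|² ≤ C·φ(|Q^sym|). -/

import Mathlib

/-!
Write `a = |P^sym|`, `b = |Q^sym|`, `r = P^sym · Q^sym` and `q = p - 2`. Both
`(S(P) - S(Q)) · (P - Q)` and `|F(P) - F(Q)|²` are affine in `r`, and `|r| ≤ a b` by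
Cauchy–Schwarz, so when `b ≤ a` it suffices to compare each of them with
`(δ + a)^q |P^sym - Q^sym|²` at the endpoints `r = ± a b`. There everything reduces to
`g(a) ∓ g(b) ≍ (δ + a)^q (a ∓ b)` for `g(t) = (δ + t)^q t` with exponents `q` and `q / 2`,
both `> -1`: for the difference this is the mean value theorem, since `g'(t) ≍ (δ + t)^q`;
for the sum it is the monotonicity of `g`. The same monotonicity gives
`(t/2) g(t/2) ≤ φ(t) ≤ t g(t)`, whence `φ(t) ≍ (δ + t)^q t²`.
-/

/-- 3×3 real matrices, represented as functions. -/
abbrev M3 : Type := Fin 3 → Fin 3 → ℝ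

/-- Symmetric part `P^sym = (P + Pᵀ)/2`. -/
noncomputable def sym3 (P : M3) : M3 := fun i j => (P i j + P j i) / 2

/-- Frobenius norm. -/
noncomputable def frob3 (P : M3) : ℝ := Real.sqrt (∑ i, ∑ j, (P i j) ^ 2)

/-- Frobenius inner product `A·B = ∑_{ij} A_{ij} B_{ij}`. -/
noncomputable def dotF (A B : M3) : ℝ := ∑ i, ∑ j, A i j * B i j

/-- The N-function `φ = φ_{p,δ}`, `φ(t) = ∫₀ᵗ (δ+s)^(p-2)·s ds`. -/
noncomputable def phiFun (p δ t : ℝ) : ℝ := ∫ s in (0:ℝ)..t, (δ + s) ^ (p - 2) * s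

/-- The stress tensor `S(P) = (δ+|P^sym|)^{p−2} P^sym`. -/
noncomputable def Smat (p δ : ℝ) (P : M3) : M3 :=
  fun i j => (δ + frob3 (sym3 P)) ^ (p - 2) * sym3 P i j

/-- `F(P) = (δ+|P^sym|)^{(p−2)/2} P^sym`. -/
noncomputable def Fmat (p δ : ℝ) (P : M3) : M3 :=
  fun i j => (δ + frob3 (sym3 P)) ^ ((p - 2) / 2) * sym3 P i j

open Real Set

def Sandwiched (c C x y : ℝ) : Prop := c * y ≤ x ∧ x ≤ C * y

namespace Sandwiched

variable {c C c' C' x y z s : ℝ}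

lemma mono (h : Sandwiched c C x y) (hy : 0 ≤ y) (hc : c' ≤ c) (hC : C ≤ C') :
    Sandwiched c' C' x y :=
  ⟨(mul_le_mul_of_nonneg_right hc hy).trans h.1, h.2.trans (mul_le_mul_of_nonneg_right hC hy)⟩

lemma symm (h : Sandwiched c C x y) (hc : 0 < c) (hC : 0 < C) : Sandwiched C⁻¹ c⁻¹ y x :=
  ⟨by rw [inv_mul_le_iff₀ hC]; exact h.2, by rw [le_inv_mul_iff₀ hc]; exact h.1⟩

lemma trans (hxy : Sandwiched c C x y) (hyz : Sandwiched c' C' y z) (hc : 0 ≤ c) (hC : 0 ≤ C) :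
    Sandwiched (c * c') (C * C') x z :=
  ⟨by rw [mul_assoc]; exact (mul_le_mul_of_nonneg_left hyz.1 hc).trans hxy.1,
    by rw [mul_assoc]; exact hxy.2.trans (mul_le_mul_of_nonneg_left hyz.2 hC)⟩

lemma mul_nonneg (h : Sandwiched c C x y) (hs : 0 ≤ s) : Sandwiched c C (x * s) (y * s) :=
  ⟨by rw [← mul_assoc]; exact mul_le_mul_of_nonneg_right h.1 hs,
    by rw [← mul_assoc]; exact mul_le_mul_of_nonneg_right h.2 hs⟩

lemma sq (h : Sandwiched c C x y) (hc : 0 ≤ c) (hy : 0 ≤ y) :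
    Sandwiched (c ^ 2) (C ^ 2) (x ^ 2) (y ^ 2) := by
  have hcy : 0 ≤ c * y := _root_.mul_nonneg hc hy
  exact ⟨by rw [← mul_pow]; exact pow_le_pow_left₀ hcy h.1 2,
    by rw [← mul_pow]; exact pow_le_pow_left₀ (hcy.trans h.1) h.2 2⟩

lemma of_affine {f g : ℝ → ℝ} {r : ℝ} (hf : ∀ x, f x = f 0 + (f 1 - f 0) * x)
    (hg : ∀ x, g x = g 0 + (g 1 - g 0) * x) (hr : |r| ≤ s)
    (hend : ∀ σ : ℝ, σ = 1 ∨ σ = -1 → Sandwiched c C (f (σ * s)) (g (σ * s))) :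
    Sandwiched c C (f r) (g r) := by
  obtain ⟨hr₁, hr₂⟩ := abs_le.mp hr
  obtain ⟨hn₁, hn₂⟩ := hend (-1) (Or.inr rfl)
  obtain ⟨hp₁, hp₂⟩ := hend 1 (Or.inl rfl)
  rw [hf, hg] at hn₁ hn₂ hp₁ hp₂ ⊢
  constructor
  · rcases le_total 0 (f 1 - f 0 - c * (g 1 - g 0)) with h | h <;> nlinarith
  · rcases le_total 0 (C * (g 1 - g 0) - (f 1 - f 0)) with h | h <;> nlinarith

end Sandwiched

section Profile

variable {q δ a b x : ℝ}

lemma rpow_eq_rpow_sub_one_mul (hx : x ≠ 0) (q : ℝ) : x ^ q = x ^ (q - 1) * x := by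
  rw [← rpow_add_one hx, sub_add_cancel]

lemma rpow_div_two_sq (hx : 0 ≤ x) (q : ℝ) : (x ^ (q / 2)) ^ 2 = x ^ q := by
  rw [← rpow_natCast, ← rpow_mul hx]; norm_num

lemma hasDerivAt_rpow_mul_self (hx : 0 < δ + x) :
    HasDerivAt (fun t => (δ + t) ^ q * t) ((δ + x) ^ (q - 1) * (δ + (1 + q) * x)) x := by
  refine ((((hasDerivAt_id x).const_add δ).rpow_const (Or.inl hx.ne')).mul
    (hasDerivAt_id x)).congr_deriv ?_
  simp only [id_eq]
  rw [rpow_eq_rpow_sub_one_mul hx.ne' q]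
  ring

lemma rpow_sub_one_mul_sandwiched (hδ : 0 ≤ δ) (hx : 0 ≤ x) (hδx : 0 < δ + x) :
    Sandwiched (min 1 (1 + q)) (max 1 (1 + q))
      ((δ + x) ^ (q - 1) * (δ + (1 + q) * x)) ((δ + x) ^ q) := by
  rw [rpow_eq_rpow_sub_one_mul hδx.ne' q]
  have hw : 0 < (δ + x) ^ (q - 1) := rpow_pos_of_pos hδx _
  have hlo : min 1 (1 + q) * (δ + x) ≤ δ + (1 + q) * x := by
    nlinarith [min_le_left 1 (1 + q), min_le_right 1 (1 + q)]
  have hhi : δ + (1 + q) * x ≤ max 1 (1 + q) * (δ + x) := by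
    nlinarith [le_max_left 1 (1 + q), le_max_right 1 (1 + q)]
  constructor <;> nlinarith

lemma exists_rpow_mul_self_sub_eq (hb : 0 < δ + b) (hba : b < a) :
    ∃ ξ ∈ Ioo b a, (δ + a) ^ q * a - (δ + b) ^ q * b
      = (δ + ξ) ^ (q - 1) * (δ + (1 + q) * ξ) * (a - b) := by
  obtain ⟨ξ, hξ, hslope⟩ := exists_hasDerivAt_eq_slope (fun t => (δ + t) ^ q * t) _ hba
    (fun x hx => (hasDerivAt_rpow_mul_self (q := q) (by linarith [hx.1])).continuousAt
      |>.continuousWithinAt)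
    (fun x hx => hasDerivAt_rpow_mul_self (by linarith [hx.1]))
  refine ⟨ξ, hξ, ?_⟩
  rw [hslope, div_mul_cancel₀ _ (sub_ne_zero.mpr hba.ne')]

lemma rpow_mul_self_sub_sandwiched (hq : -1 < q) (hδ : 0 ≤ δ) (hb : 0 ≤ b) (hba : b ≤ a) :
    Sandwiched (min 1 (1 + q)) (max 1 (1 + q))
      ((δ + a) ^ q * a - (δ + b) ^ q * b) ((δ + a) ^ q * (a - b)) := by
  rcases hba.eq_or_lt with rfl | hlt
  · simp [Sandwiched]
  rcases (add_nonneg hδ hb).eq_or_lt with hδb | hδb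
  · obtain ⟨rfl, rfl⟩ : δ = 0 ∧ b = 0 := ⟨by linarith, by linarith⟩
    have hX : 0 ≤ a ^ q * a := mul_nonneg (rpow_nonneg (by linarith) q) (by linarith)
    simp only [zero_add, mul_zero, sub_zero]
    exact ⟨mul_le_of_le_one_left hX (min_le_left _ _), le_mul_of_one_le_left hX (le_max_left _ _)⟩
  obtain ⟨ξ, hξ, hD⟩ := exists_rpow_mul_self_sub_eq (q := q) hδb hlt
  rw [hD]
  have hξ₀ : 0 ≤ ξ := hb.trans hξ.1.le
  have hδξ : 0 < δ + ξ := by linarith [hξ.1]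
  have hab : 0 ≤ a - b := by linarith
  have hslope := (rpow_sub_one_mul_sandwiched (q := q) hδ hξ₀ hδξ).mul_nonneg hab
  have hβ : 0 ≤ (δ + b) ^ q := rpow_nonneg hδb.le q
  rcases le_total 0 q with hq₀ | hq₀
  · have hξa : (δ + ξ) ^ q ≤ (δ + a) ^ q := rpow_le_rpow hδξ.le (by linarith [hξ.2]) hq₀
    have hba' : (δ + b) ^ q ≤ (δ + a) ^ q := rpow_le_rpow hδb.le (by linarith) hq₀
    refine ⟨?_, hslope.2.trans ?_⟩
    · rw [← hD, min_eq_left (by linarith)]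
      nlinarith
    · exact mul_le_mul_of_nonneg_left (mul_le_mul_of_nonneg_right hξa hab)
        (zero_le_one.trans (le_max_left _ _))
  · have hξa : (δ + a) ^ q ≤ (δ + ξ) ^ q :=
      rpow_le_rpow_of_nonpos hδξ (by linarith [hξ.2]) hq₀
    have hba' : (δ + a) ^ q ≤ (δ + b) ^ q := rpow_le_rpow_of_nonpos hδb (by linarith) hq₀
    refine ⟨le_trans ?_ hslope.1, ?_⟩
    · exact mul_le_mul_of_nonneg_left (mul_le_mul_of_nonneg_right hξa hab)
        (lt_min one_pos (by linarith)).le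
    · rw [← hD, max_eq_left (by linarith)]
      nlinarith

lemma monotoneOn_rpow_mul_self (hq : -1 < q) (hδ : 0 ≤ δ) :
    MonotoneOn (fun t => (δ + t) ^ q * t) (Ici 0) := by
  intro b hb a _ hba
  have h := (rpow_mul_self_sub_sandwiched hq hδ hb hba).1
  have hX : 0 ≤ min 1 (1 + q) * ((δ + a) ^ q * (a - b)) :=
    mul_nonneg (lt_min one_pos (by linarith)).le
      (mul_nonneg (rpow_nonneg (by linarith [mem_Ici.mp hb]) q) (sub_nonneg.mpr hba))
  exact sub_nonneg.mp (hX.trans h)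

lemma rpow_mul_self_add_sandwiched (hq : -1 < q) (hδ : 0 ≤ δ) (hb : 0 ≤ b) (hba : b ≤ a) :
    Sandwiched (1 / 2) 2 ((δ + a) ^ q * a + (δ + b) ^ q * b) ((δ + a) ^ q * (a + b)) := by
  have hα : 0 ≤ (δ + a) ^ q := rpow_nonneg (by linarith) q
  have hβ : 0 ≤ (δ + b) ^ q * b := mul_nonneg (rpow_nonneg (by linarith) q) hb
  have hmono : (δ + b) ^ q * b ≤ (δ + a) ^ q * a :=
    monotoneOn_rpow_mul_self hq hδ (mem_Ici.mpr hb) (mem_Ici.mpr (hb.trans hba)) hba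
  constructor <;> nlinarith

lemma rpow_mul_self_sub_sign_mul_sandwiched {σ : ℝ} (hq : -1 < q) (hδ : 0 ≤ δ) (hb : 0 ≤ b)
    (hba : b ≤ a) (hσ : σ = 1 ∨ σ = -1) :
    Sandwiched (min (1 / 2) (1 + q)) (max 2 (1 + q))
      ((δ + a) ^ q * a - σ * ((δ + b) ^ q * b)) ((δ + a) ^ q * (a - σ * b)) := by
  have hα : 0 ≤ (δ + a) ^ q := rpow_nonneg (by linarith) q
  rcases hσ with rfl | rfl
  · simp only [one_mul]
    exact (rpow_mul_self_sub_sandwiched hq hδ hb hba).mono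
      (mul_nonneg hα (sub_nonneg.mpr hba)) (min_le_min_right _ (by norm_num))
      (max_le_max_right _ (by norm_num))
  · simp only [neg_one_mul, sub_neg_eq_add]
    exact (rpow_mul_self_add_sandwiched hq hδ hb hba).mono (mul_nonneg hα (by linarith))
      (min_le_left _ _) (le_max_left _ _)

end Profile

/- With `a = |P^sym|`, `b = |Q^sym|`, `r = P^sym · Q^sym` and `q = p - 2`, these are
`(S(P) - S(Q)) · (P - Q)` and `|F(P) - F(Q)|²`. -/
noncomputable def stressPairing (q δ a b r : ℝ) : ℝ :=
  (δ + a) ^ q * a ^ 2 + (δ + b) ^ q * b ^ 2 - ((δ + a) ^ q + (δ + b) ^ q) * r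

noncomputable def fDistSq (q δ a b r : ℝ) : ℝ :=
  ((δ + a) ^ (q / 2)) ^ 2 * a ^ 2 + ((δ + b) ^ (q / 2)) ^ 2 * b ^ 2
    - 2 * ((δ + a) ^ (q / 2) * (δ + b) ^ (q / 2)) * r

section ScalarForms

variable {q δ a b r : ℝ}

lemma stressPairing_comm : stressPairing q δ a b r = stressPairing q δ b a r := by
  unfold stressPairing; ring

lemma fDistSq_comm : fDistSq q δ a b r = fDistSq q δ b a r := by
  unfold fDistSq; ring

lemma stressPairing_sandwiched (hq : -1 < q) (hδ : 0 ≤ δ) (hb : 0 ≤ b) (hba : b ≤ a)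
    (hr : |r| ≤ a * b) :
    Sandwiched (min (1 / 2) (1 + q)) (max 2 (1 + q))
      (stressPairing q δ a b r) ((δ + a) ^ q * (a ^ 2 + b ^ 2 - 2 * r)) := by
  refine Sandwiched.of_affine (f := fun r => stressPairing q δ a b r)
    (g := fun r => (δ + a) ^ q * (a ^ 2 + b ^ 2 - 2 * r))
    (fun _ => by simp only [stressPairing]; ring) (fun _ => by ring) hr fun σ hσ => ?_
  have hσ2 : σ ^ 2 = 1 := by rcases hσ with rfl | rfl <;> norm_num
  have hs : 0 ≤ a - σ * b := by rcases hσ with rfl | rfl <;> linarith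
  convert (rpow_mul_self_sub_sign_mul_sandwiched hq hδ hb hba hσ).mul_nonneg hs using 1
  · simp only [stressPairing]
    linear_combination (-(δ + b) ^ q * b ^ 2) * hσ2
  · linear_combination (-(δ + a) ^ q * b ^ 2) * hσ2

lemma fDistSq_sandwiched (hq : -1 < q) (hδ : 0 ≤ δ) (hb : 0 ≤ b) (hba : b ≤ a)
    (hr : |r| ≤ a * b) :
    Sandwiched (min (1 / 2) (1 + q / 2) ^ 2) (max 2 (1 + q / 2) ^ 2)
      (fDistSq q δ a b r) ((δ + a) ^ q * (a ^ 2 + b ^ 2 - 2 * r)) := by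
  refine Sandwiched.of_affine (f := fun r => fDistSq q δ a b r)
    (g := fun r => (δ + a) ^ q * (a ^ 2 + b ^ 2 - 2 * r))
    (fun _ => by simp only [fDistSq]; ring) (fun _ => by ring) hr fun σ hσ => ?_
  have hσ2 : σ ^ 2 = 1 := by rcases hσ with rfl | rfl <;> norm_num
  have hs : 0 ≤ a - σ * b := by rcases hσ with rfl | rfl <;> linarith
  have h := rpow_mul_self_sub_sign_mul_sandwiched (q := q / 2) (by linarith) hδ hb hba hσ
  convert h.sq (lt_min (by norm_num) (by linarith)).le
    (mul_nonneg (rpow_nonneg (by linarith) _) hs) using 1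
  · simp only [fDistSq]
    linear_combination (-((δ + b) ^ (q / 2)) ^ 2 * b ^ 2) * hσ2
  · rw [mul_pow, rpow_div_two_sq (by linarith)]
    linear_combination (-(δ + a) ^ q * b ^ 2) * hσ2

lemma exists_stressPairing_sandwiched_fDistSq (hq : -1 < q) :
    ∃ c C : ℝ, 0 < c ∧ 0 < C ∧ ∀ δ a b r : ℝ, 0 ≤ δ → 0 ≤ a → 0 ≤ b → |r| ≤ a * b →
      Sandwiched c C (stressPairing q δ a b r) (fDistSq q δ a b r) := by
  have hk : 0 < min (1 / 2) (1 + q / 2) ^ 2 := pow_pos (lt_min (by norm_num) (by linarith)) 2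
  have hK : 0 < max 2 (1 + q / 2) ^ 2 := pow_pos (lt_max_of_lt_left (by norm_num)) 2
  refine ⟨min (1 / 2) (1 + q) * (max 2 (1 + q / 2) ^ 2)⁻¹,
    max 2 (1 + q) * (min (1 / 2) (1 + q / 2) ^ 2)⁻¹,
    mul_pos (lt_min (by norm_num) (by linarith)) (inv_pos.mpr hK),
    mul_pos (lt_max_of_lt_left (by norm_num)) (inv_pos.mpr hk), ?_⟩
  intro δ a b r hδ ha hb hr
  wlog hba : b ≤ a generalizing a b
  · rw [stressPairing_comm, fDistSq_comm]
    exact this b a hb ha (by rwa [mul_comm]) (le_of_not_ge hba)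
  exact (stressPairing_sandwiched hq hδ hb hba hr).trans
    ((fDistSq_sandwiched hq hδ hb hba hr).symm hk hK)
    (lt_min (by norm_num) (by linarith)).le (lt_max_of_lt_left (by norm_num)).le

end ScalarForms

lemma rpow_add_half_ge {q δ t : ℝ} (hδ : 0 ≤ δ) (ht : 0 < t) :
    min 1 (2 ^ (-q)) * (δ + t) ^ q ≤ (δ + t / 2) ^ q := by
  rcases le_total 0 q with hq | hq
  · calc min 1 (2 ^ (-q)) * (δ + t) ^ q ≤ 2 ^ (-q) * (δ + t) ^ q :=
          mul_le_mul_of_nonneg_right (min_le_right _ _) (rpow_nonneg (by linarith) q)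
      _ = ((δ + t) / 2) ^ q := by
          rw [div_rpow (by linarith) zero_le_two, rpow_neg zero_le_two, div_eq_inv_mul]
      _ ≤ (δ + t / 2) ^ q := rpow_le_rpow (by linarith) (by linarith) hq
  · calc min 1 (2 ^ (-q)) * (δ + t) ^ q ≤ 1 * (δ + t) ^ q :=
          mul_le_mul_of_nonneg_right (min_le_left _ _) (rpow_nonneg (by linarith) q)
      _ ≤ (δ + t / 2) ^ q := by
          rw [one_mul]; exact rpow_le_rpow_of_nonpos (by linarith) (by linarith) hq

section MonotoneIntegral

variable {g : ℝ → ℝ} {x y : ℝ}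

lemma MonotoneOn.intervalIntegrable_of_le (hg : MonotoneOn g (Icc x y)) (hxy : x ≤ y) :
    IntervalIntegrable g MeasureTheory.volume x y :=
  MonotoneOn.intervalIntegrable (by rwa [uIcc_of_le hxy])

lemma MonotoneOn.sub_mul_le_intervalIntegral (hg : MonotoneOn g (Icc x y)) (hxy : x ≤ y) :
    (y - x) * g x ≤ ∫ s in x..y, g s := by
  have h := intervalIntegral.integral_mono_on hxy intervalIntegrable_const
    (hg.intervalIntegrable_of_le hxy) fun s hs => hg (left_mem_Icc.mpr hxy) hs hs.1
  rwa [intervalIntegral.integral_const, smul_eq_mul] at h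

lemma MonotoneOn.intervalIntegral_le_sub_mul (hg : MonotoneOn g (Icc x y)) (hxy : x ≤ y) :
    ∫ s in x..y, g s ≤ (y - x) * g y := by
  have h := intervalIntegral.integral_mono_on hxy (hg.intervalIntegrable_of_le hxy)
    intervalIntegrable_const fun s hs => hg hs (right_mem_Icc.mpr hxy) hs.2
  rwa [intervalIntegral.integral_const, smul_eq_mul] at h

end MonotoneIntegral

lemma phiFun_sandwiched {p δ t : ℝ} (hp : 1 < p) (hδ : 0 ≤ δ) (ht : 0 ≤ t) :
    Sandwiched (min 1 (2 ^ (-(p - 2))) / 4) 1 (phiFun p δ t) ((δ + t) ^ (p - 2) * t ^ 2) := by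
  set g : ℝ → ℝ := fun s => (δ + s) ^ (p - 2) * s with hg
  have hmono : ∀ x y, 0 ≤ x → MonotoneOn g (Icc x y) := fun x y hx =>
    (monotoneOn_rpow_mul_self (by linarith) hδ).mono fun s hs => hx.trans hs.1
  rcases ht.eq_or_lt with rfl | ht
  · simp [Sandwiched, phiFun]
  constructor
  · have hsplit : phiFun p δ t = (∫ s in (0 : ℝ)..t / 2, g s) + ∫ s in t / 2..t, g s :=
      (intervalIntegral.integral_add_adjacent_intervals
        ((hmono _ _ le_rfl).intervalIntegrable_of_le (by linarith))
        ((hmono _ _ (by linarith)).intervalIntegrable_of_le (by linarith))).symm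
    have hfirst : 0 ≤ ∫ s in (0 : ℝ)..t / 2, g s :=
      intervalIntegral.integral_nonneg (by linarith) fun s hs =>
        mul_nonneg (rpow_nonneg (by linarith [hs.1]) _) hs.1
    have hsecond := (hmono (t / 2) t (by linarith)).sub_mul_le_intervalIntegral (by linarith)
    calc min 1 (2 ^ (-(p - 2))) / 4 * ((δ + t) ^ (p - 2) * t ^ 2)
        = min 1 (2 ^ (-(p - 2))) * (δ + t) ^ (p - 2) * (t ^ 2 / 4) := by ring
      _ ≤ (δ + t / 2) ^ (p - 2) * (t ^ 2 / 4) :=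
        mul_le_mul_of_nonneg_right (rpow_add_half_ge hδ ht) (by positivity)
      _ = (t - t / 2) * g (t / 2) := by rw [hg]; ring
      _ ≤ phiFun p δ t := by linarith
  · calc phiFun p δ t ≤ (t - 0) * g t := (hmono 0 t le_rfl).intervalIntegral_le_sub_mul ht.le
      _ = 1 * ((δ + t) ^ (p - 2) * t ^ 2) := by rw [hg]; ring

section Matrices

variable (p δ : ℝ) (A B P Q : M3)

lemma frob3_sq : frob3 A ^ 2 = ∑ i, ∑ j, A i j ^ 2 :=
  sq_sqrt (by positivity)

lemma frob3_nonneg : 0 ≤ frob3 A := sqrt_nonneg _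

lemma dotF_self : dotF A A = frob3 A ^ 2 := by
  rw [frob3_sq]; simp only [dotF, sq]

lemma abs_dotF_le : |dotF A B| ≤ frob3 A * frob3 B := by
  rw [frob3, frob3, ← sqrt_mul (by positivity)]
  apply abs_le_sqrt
  have h := Finset.sum_mul_sq_le_sq_mul_sq Finset.univ
    (fun ij : Fin 3 × Fin 3 => A ij.1 ij.2) (fun ij : Fin 3 × Fin 3 => B ij.1 ij.2)
  simpa only [Fintype.sum_prod_type, dotF] using h

lemma dotF_Smat_sub : dotF (Smat p δ P - Smat p δ Q) (P - Q)
    = stressPairing (p - 2) δ (frob3 (sym3 P)) (frob3 (sym3 Q)) (dotF (sym3 P) (sym3 Q)) := by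
  rw [stressPairing, ← dotF_self, ← dotF_self]
  simp only [dotF, Smat, sym3, Pi.sub_apply, Fin.sum_univ_three]
  ring

lemma frob3_Fmat_sub_sq : frob3 (Fmat p δ P - Fmat p δ Q) ^ 2
    = fDistSq (p - 2) δ (frob3 (sym3 P)) (frob3 (sym3 Q)) (dotF (sym3 P) (sym3 Q)) := by
  rw [fDistSq, ← dotF_self, ← dotF_self, ← dotF_self]
  simp only [dotF, Fmat, sym3, Pi.sub_apply, Fin.sum_univ_three]
  ring

lemma dotF_Smat_self :
    dotF (Smat p δ Q) Q = (δ + frob3 (sym3 Q)) ^ (p - 2) * frob3 (sym3 Q) ^ 2 := by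
  rw [← dotF_self]
  simp only [dotF, Smat, sym3, Fin.sum_univ_three]
  ring

lemma frob3_Fmat_sq (hδ : 0 ≤ δ) :
    frob3 (Fmat p δ Q) ^ 2 = (δ + frob3 (sym3 Q)) ^ (p - 2) * frob3 (sym3 Q) ^ 2 := by
  rw [← rpow_div_two_sq (add_nonneg hδ (frob3_nonneg _)), ← dotF_self, ← dotF_self]
  simp only [dotF, Fmat, sym3, Fin.sum_univ_three]
  ring

end Matrices

/-- For `p ∈ (1,∞)` there exist `c, C > 0` depending only on `p` such that for all
`δ ≥ 0` and all 3×3 matrices `P, Q`: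
`c·|F(P)−F(Q)|² ≤ (S(P)−S(Q))·(P−Q) ≤ C·|F(P)−F(Q)|²`,
`c·φ(|Q^sym|) ≤ S(Q)·Q ≤ C·φ(|Q^sym|)` and `c·φ(|Q^sym|) ≤ |F(Q)|² ≤ C·φ(|Q^sym|)`. -/
theorem hammer_equivalences (p : ℝ) (hp : 1 < p) :
    ∃ c C : ℝ, 0 < c ∧ 0 < C ∧
      ∀ δ : ℝ, 0 ≤ δ → ∀ P Q : M3,
        (c * (frob3 (Fmat p δ P - Fmat p δ Q)) ^ 2
            ≤ dotF (Smat p δ P - Smat p δ Q) (P - Q) ∧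
          dotF (Smat p δ P - Smat p δ Q) (P - Q)
            ≤ C * (frob3 (Fmat p δ P - Fmat p δ Q)) ^ 2) ∧
        (c * phiFun p δ (frob3 (sym3 Q)) ≤ dotF (Smat p δ Q) Q ∧
          dotF (Smat p δ Q) Q ≤ C * phiFun p δ (frob3 (sym3 Q))) ∧
        (c * phiFun p δ (frob3 (sym3 Q)) ≤ (frob3 (Fmat p δ Q)) ^ 2 ∧
          (frob3 (Fmat p δ Q)) ^ 2 ≤ C * phiFun p δ (frob3 (sym3 Q))) := by
  obtain ⟨c₁, C₁, hc₁, hC₁, hpair⟩ :=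
    exists_stressPairing_sandwiched_fDistSq (q := p - 2) (by linarith)
  set c₀ : ℝ := min 1 (2 ^ (-(p - 2))) / 4
  have hc₀ : 0 < c₀ := by positivity
  refine ⟨min c₁ 1, max C₁ c₀⁻¹, lt_min hc₁ one_pos, lt_max_of_lt_left hC₁, ?_⟩
  intro δ hδ P Q
  have hpair' : Sandwiched c₁ C₁ (dotF (Smat p δ P - Smat p δ Q) (P - Q))
      (frob3 (Fmat p δ P - Fmat p δ Q) ^ 2) := by
    rw [dotF_Smat_sub, frob3_Fmat_sub_sq]
    exact hpair δ _ _ _ hδ (frob3_nonneg _) (frob3_nonneg _) (abs_dotF_le _ _)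
  have hφ := phiFun_sandwiched hp hδ (frob3_nonneg (sym3 Q))
  have hφ₀ := (mul_nonneg hc₀.le (mul_nonneg
    (rpow_nonneg (add_nonneg hδ (frob3_nonneg _)) _) (sq_nonneg _))).trans hφ.1
  have hφ' : Sandwiched 1 c₀⁻¹ ((δ + frob3 (sym3 Q)) ^ (p - 2) * frob3 (sym3 Q) ^ 2)
      (phiFun p δ (frob3 (sym3 Q))) := by
    simpa only [inv_one] using hφ.symm hc₀ one_pos
  refine ⟨hpair'.mono (sq_nonneg _) (min_le_left _ _) (le_max_left _ _), ?_, ?_⟩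
  · rw [dotF_Smat_self]
    exact hφ'.mono hφ₀ (min_le_right _ _) (le_max_right _ _)
  · rw [frob3_Fmat_sq p δ Q hδ]
    exact hφ'.mono hφ₀ (min_le_right _ _) (le_max_right _ _)
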